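/- For n ≥ 2, the number of preference lists α ∈ [n]^n that are not parking functions and have exactly n−1 lucky cars equals the number of parking functions of length n with exactly n−1 lucky cars, and each of these two counts equals L_n / 2. -/

import Mathlib

open Finset

/-- The first unoccupied spot numbered greater than or equal to `p`, if any. -/
def nextSpot {n : ℕ} (occ : Finset (Fin n)) (p : Fin n) : Option (Fin n) :=
  if h : (Finset.univ.filter (fun s : Fin n => p ≤ s ∧ s ∉ occ)).Nonempty then
    some ((Finset.univ.filter (fun s : Fin n => p ≤ s ∧ s ∉ occ)).min' h)
  else none

/-- The set of occupied spots after the first `k` cars have tried to park,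
given the preference list `α`. -/
def occupiedAfter {n : ℕ} (α : Fin n → Fin n) : ℕ → Finset (Fin n)
  | 0 => ∅
  | k + 1 =>
    if h : k < n then
      match nextSpot (occupiedAfter α k) (α ⟨k, h⟩) with
      | some s => insert s (occupiedAfter α k)
      | none => occupiedAfter α k
    else occupiedAfter α k

/-- The spot in which car `i` parks (cars numbered `0,…,n-1` enter in order),
or `none` if car `i` is unable to park. -/
def carSpot {n : ℕ} (α : Fin n → Fin n) (i : Fin n) : Option (Fin n) :=
  nextSpot (occupiedAfter α i.val) (α i)

/-- The number of lucky cars: cars parking exactly in their preferred spot. -/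
def luckyCount {n : ℕ} (α : Fin n → Fin n) : ℕ :=
  (Finset.univ.filter (fun i : Fin n => carSpot α i = some (α i))).card

/-- `L n` is the number of preference lists in `[n]^n` with exactly `n - 1` lucky cars. -/
def luckyL (n : ℕ) : ℕ :=
  (Finset.univ.filter
    (fun α : Fin n → Fin n => (luckyCount α : ℤ) = (n : ℤ) - 1)).card

/-- The `n`th harmonic number. -/
noncomputable def H (n : ℕ) : ℝ := ∑ i ∈ Finset.Icc 1 n, (1 : ℝ) / i

/-- `α` is a parking function when every car manages to park. -/
def IsParkingFunction {n : ℕ} (α : Fin n → Fin n) : Prop :=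
  ∀ i : Fin n, (carSpot α i).isSome

instance {n : ℕ} (α : Fin n → Fin n) : Decidable (IsParkingFunction α) := by
  unfold IsParkingFunction; infer_instance

/-! ### Auxiliary development -/

section Aux

variable {n : ℕ}

/-- Structure of a non-parking list with `n-1` lucky cars: `j` is the failing car,
`e` the eventually-empty spot. -/
def Pnon (α : Fin n → Fin n) (j e : Fin n) : Prop :=
  (∀ i, i ≠ j → α i ≠ e) ∧
  (∀ i k, i ≠ j → k ≠ j → i ≠ k → α i ≠ α k) ∧
  (e : ℕ) < α j ∧
  (∀ t : Fin n, (α j : ℕ) ≤ t → ∃ i, i < j ∧ α i = t)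

/-- Structure of a parking function with `n-1` lucky cars: `j` is the unlucky car,
parking in spot `s`. -/
def Ppark (α : Fin n → Fin n) (j s : Fin n) : Prop :=
  (∀ i, i ≠ j → α i ≠ s) ∧
  (∀ i k, i ≠ j → k ≠ j → i ≠ k → α i ≠ α k) ∧
  (α j : ℕ) < s ∧
  (∀ t : Fin n, (α j : ℕ) ≤ t → (t : ℕ) < s → ∃ i, i < j ∧ α i = t)

lemma nextSpot_eq_some {occ : Finset (Fin n)} {p s : Fin n} :
    nextSpot occ p = some s ↔ (p ≤ s ∧ s ∉ occ ∧ ∀ t, p ≤ t → t < s → t ∈ occ) := by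
  unfold nextSpot
  split
  · rename_i h
    simp only [Option.some.injEq]
    constructor
    · rintro rfl
      have hmem := Finset.min'_mem _ h
      simp only [mem_filter, mem_univ, true_and] at hmem
      refine ⟨hmem.1, hmem.2, fun t hpt hts => ?_⟩
      by_contra htocc
      have : Finset.min' _ h ≤ t := Finset.min'_le _ t (by simp [hpt, htocc])
      exact absurd (lt_of_le_of_lt this hts) (lt_irrefl _)
    · rintro ⟨hps, hso, hmin⟩
      have hmem := Finset.min'_mem _ h
      simp only [mem_filter, mem_univ, true_and] at hmem
      have h1 : Finset.min' _ h ≤ s := Finset.min'_le _ s (by simp [hps, hso])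
      rcases lt_or_eq_of_le h1 with h2 | h2
      · exact absurd (hmin _ hmem.1 h2) hmem.2
      · exact h2
  · rename_i h
    refine iff_of_false (by simp) ?_
    rintro ⟨hps, hso, -⟩
    exact absurd ⟨s, by simp [hps, hso]⟩ h

lemma nextSpot_eq_none {occ : Finset (Fin n)} {p : Fin n} :
    nextSpot occ p = none ↔ ∀ s, p ≤ s → s ∈ occ := by
  unfold nextSpot
  split
  · rename_i h
    have hmem := Finset.min'_mem _ h
    simp only [mem_filter, mem_univ, true_and] at hmem
    exact iff_of_false (by simp) (fun hall => hmem.2 (hall _ hmem.1))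
  · rename_i h
    refine iff_of_true rfl (fun s hps => ?_)
    by_contra hso
    exact h ⟨s, by simp [hps, hso]⟩

lemma nextSpot_self {occ : Finset (Fin n)} {p : Fin n} (h : p ∉ occ) :
    nextSpot occ p = some p := by
  rw [nextSpot_eq_some]
  exact ⟨le_refl _, h, fun t hpt htp => absurd (lt_of_le_of_lt hpt htp) (lt_irrefl _)⟩

lemma occ_succ_some {α : Fin n → Fin n} {i : Fin n} {s : Fin n}
    (h : carSpot α i = some s) :
    occupiedAfter α ((i : ℕ) + 1) = insert s (occupiedAfter α (i : ℕ)) := by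
  have hi : (i : ℕ) < n := i.isLt
  show occupiedAfter α ((i : ℕ) + 1) = _
  rw [occupiedAfter, dif_pos hi]
  have : (⟨(i : ℕ), hi⟩ : Fin n) = i := Fin.eta i hi
  rw [this]
  unfold carSpot at h
  rw [h]

lemma occ_succ_none {α : Fin n → Fin n} {i : Fin n}
    (h : carSpot α i = none) :
    occupiedAfter α ((i : ℕ) + 1) = occupiedAfter α (i : ℕ) := by
  have hi : (i : ℕ) < n := i.isLt
  rw [occupiedAfter, dif_pos hi]
  have : (⟨(i : ℕ), hi⟩ : Fin n) = i := Fin.eta i hi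
  rw [this]
  unfold carSpot at h
  rw [h]

lemma occ_subset_succ (α : Fin n → Fin n) (k : ℕ) :
    occupiedAfter α k ⊆ occupiedAfter α (k + 1) := by
  rw [occupiedAfter]
  split
  · split
    · exact Finset.subset_insert _ _
    · exact Finset.Subset.refl _
  · exact Finset.Subset.refl _

lemma occ_mono (α : Fin n → Fin n) {k k' : ℕ} (h : k ≤ k') :
    occupiedAfter α k ⊆ occupiedAfter α k' := by
  induction k' with
  | zero => simp_all
  | succ k' ih =>
    rcases Nat.lt_or_ge k (k' + 1) with h1 | h1
    · exact (ih (by omega)).trans (occ_subset_succ α k')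
    · have : k = k' + 1 := by omega
      subst this; exact Finset.Subset.refl _

lemma spot_mem {α : Fin n → Fin n} {i : Fin n} {s : Fin n} {k : ℕ}
    (h : carSpot α i = some s) (hik : (i : ℕ) < k) :
    s ∈ occupiedAfter α k := by
  have h1 : s ∈ occupiedAfter α ((i : ℕ) + 1) := by
    rw [occ_succ_some h]; exact Finset.mem_insert_self _ _
  exact occ_mono α (by omega) h1

lemma lucky_not_mem {α : Fin n → Fin n} {i : Fin n}
    (h : carSpot α i = some (α i)) : α i ∉ occupiedAfter α (i : ℕ) := by
  unfold carSpot at h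
  exact (nextSpot_eq_some.1 h).2.1

/-- Occupancy after a run of lucky cars.  If from time `m` to `k` every car's
preference is fresh, then those cars are all lucky and occupancy grows by
exactly their preferences. -/
lemma lucky_run (α : Fin n → Fin n) (m k : ℕ) (hmk : m ≤ k) (hk : k ≤ n)
    (h : ∀ i : Fin n, m ≤ (i : ℕ) → (i : ℕ) < k → α i ∉ occupiedAfter α m ∧
          ∀ i' : Fin n, m ≤ (i' : ℕ) → (i' : ℕ) < (i : ℕ) → α i ≠ α i') :
    (occupiedAfter α k = occupiedAfter α m ∪
      (Finset.univ.filter fun i : Fin n => m ≤ (i : ℕ) ∧ (i : ℕ) < k).image α) ∧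
    (∀ i : Fin n, m ≤ (i : ℕ) → (i : ℕ) < k → carSpot α i = some (α i)) := by
  induction k, hmk using Nat.le_induction with
  | base =>
    constructor
    · have : (Finset.univ.filter fun i : Fin n => m ≤ (i : ℕ) ∧ (i : ℕ) < m) = ∅ := by
        ext x
        simp only [Finset.mem_filter, Finset.mem_univ, true_and, Finset.notMem_empty,
          iff_false, not_and]
        omega
      simp [this]
    · intro i h1 h2; omega
  | succ k hmk ih =>
    have hkn : k < n := by omega
    set i : Fin n := ⟨k, hkn⟩ with hidef
    have hiv : (i : ℕ) = k := rfl
    have IH := ih (by omega) (fun i' h1 h2 => h i' h1 (by omega))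
    have hni : α i ∉ occupiedAfter α k := by
      rw [IH.1]
      simp only [Finset.mem_union, Finset.mem_image, Finset.mem_filter, not_or]
      constructor
      · exact (h i (by omega) (by omega)).1
      · rintro ⟨i', ⟨-, h1, h2⟩, heq⟩
        exact (h i (by omega) (by omega)).2 i' h1 h2 heq.symm
    have hlucky : carSpot α i = some (α i) := by
      unfold carSpot
      exact nextSpot_self hni
    have hocc : occupiedAfter α (k + 1) = insert (α i) (occupiedAfter α k) := by
      have := occ_succ_some hlucky
      rwa [hiv] at this
    constructor
    · rw [hocc, IH.1]
      have hfilt : (Finset.univ.filter fun x : Fin n => m ≤ (x : ℕ) ∧ (x : ℕ) < k + 1)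
          = insert i (Finset.univ.filter fun x : Fin n => m ≤ (x : ℕ) ∧ (x : ℕ) < k) := by
        ext x
        simp only [Finset.mem_filter, Finset.mem_univ, true_and, Finset.mem_insert]
        constructor
        · rintro ⟨h1, h2⟩
          rcases Nat.lt_or_ge (x : ℕ) k with h3 | h3
          · exact Or.inr ⟨h1, h3⟩
          · exact Or.inl (Fin.ext (by omega))
        · rintro (rfl | ⟨h1, h2⟩)
          · exact ⟨by omega, by omega⟩
          · exact ⟨h1, by omega⟩
      rw [hfilt, Finset.image_insert, Finset.union_insert]
    · intro i' h1 h2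
      rcases Nat.lt_or_ge (i' : ℕ) k with h3 | h3
      · exact IH.2 i' h1 h3
      · have : i' = i := Fin.ext (by omega)
        rw [this]; exact hlucky

/-- Occupancy before the first unlucky car: exactly the earlier preferences. -/
lemma occ_of_lucky_lt (α : Fin n → Fin n) (k : ℕ) (hk : k ≤ n)
    (h : ∀ i : Fin n, (i : ℕ) < k → carSpot α i = some (α i)) :
    occupiedAfter α k =
      (Finset.univ.filter (fun i : Fin n => (i : ℕ) < k)).image α := by
  induction k with
  | zero =>
    have : (Finset.univ.filter fun i : Fin n => (i : ℕ) < 0) = ∅ := by ext x; simp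
    simp [occupiedAfter, this]
  | succ k ih =>
    have hkn : k < n := by omega
    set i : Fin n := ⟨k, hkn⟩ with hidef
    have hiv : (i : ℕ) = k := rfl
    have hlucky := h i (by omega)
    have hocc : occupiedAfter α (k + 1) = insert (α i) (occupiedAfter α k) := by
      have := occ_succ_some hlucky
      rwa [hiv] at this
    rw [hocc, ih (by omega) (fun i' h' => h i' (by omega))]
    have hfilt : (Finset.univ.filter fun x : Fin n => (x : ℕ) < k + 1)
        = insert i (Finset.univ.filter fun x : Fin n => (x : ℕ) < k) := by
      ext x
      simp only [Finset.mem_filter, Finset.mem_univ, true_and, Finset.mem_insert]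
      constructor
      · intro h1
        rcases Nat.lt_or_ge (x : ℕ) k with h3 | h3
        · exact Or.inr h3
        · exact Or.inl (Fin.ext (by omega))
      · rintro (rfl | h1)
        · omega
        · omega
    rw [hfilt, Finset.image_insert]

lemma luckyCount_eq_iff_unique_unlucky (α : Fin n → Fin n) (hn : 1 ≤ n) :
    luckyCount α = n - 1 ↔ ∃! j : Fin n, carSpot α j ≠ some (α j) := by
  have hcompl : (Finset.univ.filter fun i : Fin n => ¬ (carSpot α i = some (α i))).card
      = n - luckyCount α := by
    rw [Finset.filter_not, Finset.card_sdiff_of_subset (Finset.filter_subset _ _)]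
    simp [luckyCount]
  have hle : luckyCount α ≤ n := by
    have := Finset.card_filter_le Finset.univ (fun i : Fin n => carSpot α i = some (α i))
    simpa [luckyCount] using this
  have hone : luckyCount α = n - 1 ↔
      (Finset.univ.filter fun i : Fin n => ¬ (carSpot α i = some (α i))).card = 1 := by
    rw [hcompl]
    -- need: luckyCount ≠ n when there is an unlucky car; both directions by omega-style
    constructor
    · intro h; omega
    · intro h; omega
  rw [hone, Finset.card_eq_one]
  constructor
  · rintro ⟨j, hj⟩
    refine ⟨j, ?_, ?_⟩
    · have : j ∈ Finset.univ.filter fun i : Fin n => ¬ (carSpot α i = some (α i)) := by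
        rw [hj]; exact Finset.mem_singleton_self _
      simpa using this
    · intro y hy
      have : y ∈ Finset.univ.filter fun i : Fin n => ¬ (carSpot α i = some (α i)) := by
        simpa using hy
      rw [hj] at this
      simpa using this
  · rintro ⟨j, hj, hu⟩
    refine ⟨j, ?_⟩
    ext x
    simp only [Finset.mem_filter, Finset.mem_univ, true_and, Finset.mem_singleton]
    constructor
    · exact fun h => hu x h
    · rintro rfl; exact hj

lemma inj_off (α : Fin n → Fin n) {j : Fin n}
    (hlucky : ∀ i, i ≠ j → carSpot α i = some (α i)) :
    ∀ i k, i ≠ j → k ≠ j → i ≠ k → α i ≠ α k := by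
  have key : ∀ i k : Fin n, i ≠ j → k ≠ j → (i : ℕ) < (k : ℕ) → α i ≠ α k := by
    intro i k hi hk hik heq
    have h1 : α i ∈ occupiedAfter α (k : ℕ) := spot_mem (hlucky i hi) hik
    have h2 : α k ∉ occupiedAfter α (k : ℕ) := lucky_not_mem (hlucky k hk)
    rw [heq] at h1
    exact h2 h1
  intro i k hi hk hik heq
  rcases Nat.lt_trichotomy (i : ℕ) (k : ℕ) with h | h | h
  · exact key i k hi hk h heq
  · exact hik (Fin.ext h)
  · exact key k i hk hi h heq.symm

/-- The filter of lucky cars is everything but `j`, when `j` is unlucky and the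
rest are lucky. -/
lemma luckyCount_of (α : Fin n → Fin n) {j : Fin n}
    (hj : carSpot α j ≠ some (α j))
    (hlucky : ∀ i, i ≠ j → carSpot α i = some (α i)) :
    luckyCount α = n - 1 := by
  have : (Finset.univ.filter fun i : Fin n => carSpot α i = some (α i))
      = Finset.univ.erase j := by
    ext i
    simp only [Finset.mem_filter, Finset.mem_univ, true_and, Finset.mem_erase, and_true]
    constructor
    · intro h
      rintro rfl
      exact hj h
    · exact fun h => hlucky i h
  rw [luckyCount, this, Finset.card_erase_of_mem (Finset.mem_univ _), Finset.card_univ,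
    Fintype.card_fin]

/-- Characterization of non-parking lists with `n-1` lucky cars. -/
theorem char_non (α : Fin n → Fin n) (hn : 1 ≤ n) :
    (luckyCount α = n - 1 ∧ ¬ IsParkingFunction α) ↔ ∃ j e, Pnon α j e := by
  constructor
  · rintro ⟨hl, hnp⟩
    obtain ⟨j, hj, hju⟩ := (luckyCount_eq_iff_unique_unlucky α hn).1 hl
    have hlucky : ∀ i, i ≠ j → carSpot α i = some (α i) := by
      intro i hi
      by_contra h
      exact hi (hju i h)
    -- the failing car must be `j`
    have hnone : carSpot α j = none := by
      simp only [IsParkingFunction, not_forall] at hnp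
      obtain ⟨i0, hi0⟩ := hnp
      have h0 : carSpot α i0 = none := Option.not_isSome_iff_eq_none.1 hi0
      have : i0 = j := hju i0 (by show carSpot α i0 ≠ some (α i0); rw [h0]; simp)
      rwa [this] at h0
    have occj : occupiedAfter α (j : ℕ) =
        (Finset.univ.filter (fun i : Fin n => (i : ℕ) < (j : ℕ))).image α :=
      occ_of_lucky_lt α (j : ℕ) j.isLt.le
        (fun i hi => hlucky i (fun h => by subst h; omega))
    have h4 : ∀ t : Fin n, (α j : ℕ) ≤ (t : ℕ) → ∃ i, i < j ∧ α i = t := by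
      intro t ht
      have := nextSpot_eq_none.1 hnone t ht
      rw [occj] at this
      simp only [Finset.mem_image, Finset.mem_filter, Finset.mem_univ, true_and] at this
      obtain ⟨i, hi, heq⟩ := this
      exact ⟨i, hi, heq⟩
    have h2 := inj_off α hlucky
    -- find the missing spot
    set T := (Finset.univ.erase j).image α with hT
    have hcard : T.card < n := by
      calc T.card ≤ (Finset.univ.erase j).card := Finset.card_image_le
        _ = n - 1 := by
            rw [Finset.card_erase_of_mem (Finset.mem_univ _), Finset.card_univ,
              Fintype.card_fin]
        _ < n := by omega
    have : ∃ e : Fin n, e ∉ T := by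
      by_contra h
      push_neg at h
      have : (Finset.univ : Finset (Fin n)) ⊆ T := fun x _ => h x
      have := Finset.card_le_card this
      rw [Finset.card_univ, Fintype.card_fin] at this
      omega
    obtain ⟨e, he⟩ := this
    have h1 : ∀ i, i ≠ j → α i ≠ e := by
      intro i hi heq
      exact he (Finset.mem_image.2 ⟨i, Finset.mem_erase.2 ⟨hi, Finset.mem_univ _⟩, heq⟩)
    have h3 : (e : ℕ) < (α j : ℕ) := by
      by_contra h
      push_neg at h
      obtain ⟨i, hij, heq⟩ := h4 e h
      have hine : i ≠ j := by
        intro hh; subst hh; exact absurd hij (lt_irrefl _)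
      exact h1 i hine heq
    exact ⟨j, e, h1, h2, h3, h4⟩
  · rintro ⟨j, e, h1, h2, h3, h4⟩
    -- prefix run: cars before `j` are lucky
    have hpre := lucky_run α 0 (j : ℕ) (by omega) j.isLt.le (by
      intro i hi0 hij
      constructor
      · show α i ∉ occupiedAfter α 0
        simp [occupiedAfter]
      · intro i' hi'0 hi'i heq
        have hine : i ≠ j := fun h => by subst h; omega
        have hi'ne : i' ≠ j := fun h => by subst h; omega
        exact h2 i i' hine hi'ne (fun h => by subst h; omega) heq)
    have occj : occupiedAfter α (j : ℕ) =
        (Finset.univ.filter fun i : Fin n => 0 ≤ (i : ℕ) ∧ (i : ℕ) < (j : ℕ)).image α := by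
      have := hpre.1
      rwa [show occupiedAfter α 0 = ∅ from rfl, Finset.empty_union] at this
    have hnone : carSpot α j = none := by
      unfold carSpot
      rw [nextSpot_eq_none]
      intro t ht
      obtain ⟨i, hij, heq⟩ := h4 t ht
      rw [occj]
      exact Finset.mem_image.2 ⟨i, by
        simp only [Finset.mem_filter, Finset.mem_univ, true_and]
        exact ⟨Nat.zero_le _, Fin.lt_def.1 hij⟩, heq⟩
    have hoccsucc : occupiedAfter α ((j : ℕ) + 1) = occupiedAfter α (j : ℕ) :=
      occ_succ_none hnone
    -- suffix run: cars after `j` are lucky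
    have hsuf := lucky_run α ((j : ℕ) + 1) n (by omega) (le_refl n) (by
      intro i hi1 hin
      have hine : i ≠ j := fun h => by subst h; omega
      constructor
      · rw [hoccsucc, occj]
        intro hmem
        simp only [Finset.mem_image, Finset.mem_filter, Finset.mem_univ, true_and] at hmem
        obtain ⟨i', ⟨-, hi'j⟩, heq⟩ := hmem
        have hi'ne : i' ≠ j := fun h => by subst h; omega
        exact h2 i i' hine hi'ne (fun h => by subst h; omega) heq.symm
      · intro i' hi'1 hi'i heq
        have hi'ne : i' ≠ j := fun h => by subst h; omega
        exact h2 i i' hine hi'ne (fun h => by subst h; omega) heq)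
    have hlucky : ∀ i, i ≠ j → carSpot α i = some (α i) := by
      intro i hi
      have hvne : (i : ℕ) ≠ (j : ℕ) := fun h => hi (Fin.ext h)
      rcases Nat.lt_or_ge (i : ℕ) (j : ℕ) with h | h
      · exact hpre.2 i (by omega) h
      · exact hsuf.2 i (by omega) i.isLt
    constructor
    · exact luckyCount_of α (by rw [hnone]; simp) hlucky
    · intro hp
      have := hp j
      rw [hnone] at this
      simp at this

/-- Characterization of parking functions with `n-1` lucky cars. -/
theorem char_park (α : Fin n → Fin n) (hn : 1 ≤ n) :
    (luckyCount α = n - 1 ∧ IsParkingFunction α) ↔ ∃ j s, Ppark α j s := by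
  constructor
  · rintro ⟨hl, hp⟩
    obtain ⟨j, hj, hju⟩ := (luckyCount_eq_iff_unique_unlucky α hn).1 hl
    have hlucky : ∀ i, i ≠ j → carSpot α i = some (α i) := by
      intro i hi
      by_contra h
      exact hi (hju i h)
    obtain ⟨s, hs⟩ := Option.isSome_iff_exists.1 (hp j)
    have hsne : s ≠ α j := by
      intro h; subst h; exact hj hs
    have occj : occupiedAfter α (j : ℕ) =
        (Finset.univ.filter (fun i : Fin n => (i : ℕ) < (j : ℕ))).image α :=
      occ_of_lucky_lt α (j : ℕ) j.isLt.le
        (fun i hi => hlucky i (fun h => by subst h; omega))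
    have hchar := nextSpot_eq_some.1 hs
    have h3 : (α j : ℕ) < (s : ℕ) := by
      have := Fin.le_def.1 hchar.1
      have hne : (α j : ℕ) ≠ (s : ℕ) := fun h => hsne (Fin.ext h.symm)
      omega
    have h4 : ∀ t : Fin n, (α j : ℕ) ≤ (t : ℕ) → (t : ℕ) < (s : ℕ) →
        ∃ i, i < j ∧ α i = t := by
      intro t ht hts
      have := hchar.2.2 t (Fin.le_def.2 ht) (Fin.lt_def.2 hts)
      rw [occj] at this
      simp only [Finset.mem_image, Finset.mem_filter, Finset.mem_univ, true_and] at this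
      obtain ⟨i, hi, heq⟩ := this
      exact ⟨i, hi, heq⟩
    have h2 := inj_off α hlucky
    have h1 : ∀ i, i ≠ j → α i ≠ s := by
      intro i hi heq
      rcases Nat.lt_trichotomy (i : ℕ) (j : ℕ) with h | h | h
      · have hmem : α i ∈ occupiedAfter α (j : ℕ) := spot_mem (hlucky i hi) h
        rw [heq] at hmem
        exact hchar.2.1 hmem
      · exact hi (Fin.ext h)
      · have hmem : s ∈ occupiedAfter α (i : ℕ) := spot_mem hs h
        have := lucky_not_mem (hlucky i hi)
        rw [heq] at this
        exact this hmem
    exact ⟨j, s, h1, h2, h3, h4⟩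
  · rintro ⟨j, s, h1, h2, h3, h4⟩
    have hpre := lucky_run α 0 (j : ℕ) (by omega) j.isLt.le (by
      intro i hi0 hij
      constructor
      · show α i ∉ occupiedAfter α 0
        simp [occupiedAfter]
      · intro i' hi'0 hi'i heq
        have hine : i ≠ j := fun h => by subst h; omega
        have hi'ne : i' ≠ j := fun h => by subst h; omega
        exact h2 i i' hine hi'ne (fun h => by subst h; omega) heq)
    have occj : occupiedAfter α (j : ℕ) =
        (Finset.univ.filter fun i : Fin n => 0 ≤ (i : ℕ) ∧ (i : ℕ) < (j : ℕ)).image α := by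
      have := hpre.1
      rwa [show occupiedAfter α 0 = ∅ from rfl, Finset.empty_union] at this
    have hjspot : carSpot α j = some s := by
      unfold carSpot
      rw [nextSpot_eq_some]
      refine ⟨Fin.le_def.2 (by omega), ?_, ?_⟩
      · rw [occj]
        intro hmem
        simp only [Finset.mem_image, Finset.mem_filter, Finset.mem_univ, true_and] at hmem
        obtain ⟨i, ⟨-, hij⟩, heq⟩ := hmem
        exact h1 i (fun h => by subst h; omega) heq
      · intro t ht hts
        obtain ⟨i, hij, heq⟩ := h4 t (Fin.le_def.1 ht) (Fin.lt_def.1 hts)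
        rw [occj]
        exact Finset.mem_image.2 ⟨i, by
          simp only [Finset.mem_filter, Finset.mem_univ, true_and]
          exact ⟨Nat.zero_le _, Fin.lt_def.1 hij⟩, heq⟩
    have hoccsucc : occupiedAfter α ((j : ℕ) + 1) =
        insert s (occupiedAfter α (j : ℕ)) := occ_succ_some hjspot
    have hsuf := lucky_run α ((j : ℕ) + 1) n (by omega) (le_refl n) (by
      intro i hi1 hin
      have hine : i ≠ j := fun h => by subst h; omega
      constructor
      · rw [hoccsucc, occj]
        intro hmem
        simp only [Finset.mem_insert, Finset.mem_image, Finset.mem_filter, Finset.mem_univ,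
          true_and] at hmem
        rcases hmem with heq | ⟨i', ⟨-, hi'j⟩, heq⟩
        · exact h1 i hine heq
        · have hi'ne : i' ≠ j := fun h => by subst h; omega
          exact h2 i i' hine hi'ne (fun h => by subst h; omega) heq.symm
      · intro i' hi'1 hi'i heq
        have hi'ne : i' ≠ j := fun h => by subst h; omega
        exact h2 i i' hine hi'ne (fun h => by subst h; omega) heq)
    have hlucky : ∀ i, i ≠ j → carSpot α i = some (α i) := by
      intro i hi
      have hvne : (i : ℕ) ≠ (j : ℕ) := fun h => hi (Fin.ext h)
      rcases Nat.lt_or_ge (i : ℕ) (j : ℕ) with h | h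
      · exact hpre.2 i (by omega) h
      · exact hsuf.2 i (by omega) i.isLt
    constructor
    · refine luckyCount_of α ?_ hlucky
      rw [hjspot]
      intro h
      have : s = α j := by injection h
      subst this
      omega
    · intro i
      by_cases hi : i = j
      · subst hi; rw [hjspot]; simp
      · rw [hlucky i hi]; simp

/-- The unique spot missing from the image of `α` (junk if none or several). -/
def hole (α : Fin n → Fin n) : ℕ :=
  if h : (Finset.univ \ Finset.image α Finset.univ).Nonempty then
    ((Finset.univ \ Finset.image α Finset.univ).min' h : ℕ)
  else 0

/-- The rotation of values used in the involution. -/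
def rot (n : ℕ) (h : ℕ) (v : Fin n) : Fin n :=
  if hv : (v : ℕ) < h then ⟨(v : ℕ) + (n - h), by omega⟩
  else ⟨(v : ℕ) - h - 1, by omega⟩

lemma rot_val (h : ℕ) (v : Fin n) :
    (rot n h v : ℕ) = if (v : ℕ) < h then (v : ℕ) + (n - h) else (v : ℕ) - h - 1 := by
  unfold rot
  split <;> rfl

lemma rot_rot {h : ℕ} (hh : h < n) {v : Fin n} (hv : (v : ℕ) ≠ h) :
    rot n (n - 1 - h) (rot n h v) = v := by
  have h1 := rot_val h v
  have h2 := rot_val (n := n) (n - 1 - h) (rot n h v)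
  have hvlt := v.isLt
  have hrlt := (rot n h v).isLt
  apply Fin.ext
  rw [h2]
  split <;> (rw [h1] at *; split_ifs at * <;> omega)

lemma image_eq_erase {α : Fin n → Fin n} {j x : Fin n} (h1 : ∀ i, α i ≠ x)
    (h2 : ∀ i k, i ≠ j → k ≠ j → i ≠ k → α i ≠ α k) :
    Finset.image α Finset.univ = Finset.univ.erase x := by
  apply Finset.eq_of_subset_of_card_le
  · intro y hy
    obtain ⟨i, -, rfl⟩ := Finset.mem_image.1 hy
    exact Finset.mem_erase.2 ⟨h1 i, Finset.mem_univ _⟩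
  · have hinj : Set.InjOn α (Finset.univ.erase j) := by
      intro a ha b hb hab
      by_contra hne
      exact h2 a b (Finset.mem_erase.1 ha).1 (Finset.mem_erase.1 hb).1 hne hab
    have hc1 : ((Finset.univ.erase j).image α).card = n - 1 := by
      rw [Finset.card_image_of_injOn hinj, Finset.card_erase_of_mem (Finset.mem_univ _),
        Finset.card_univ, Fintype.card_fin]
    have hsub : (Finset.univ.erase j).image α ⊆ Finset.image α Finset.univ :=
      Finset.image_subset_image (Finset.erase_subset _ _)
    have := Finset.card_le_card hsub
    rw [Finset.card_erase_of_mem (Finset.mem_univ _), Finset.card_univ, Fintype.card_fin]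
    omega

lemma hole_eq {α : Fin n → Fin n} {x : Fin n}
    (himg : Finset.image α Finset.univ = Finset.univ.erase x) : hole α = (x : ℕ) := by
  have hsd : Finset.univ \ Finset.image α Finset.univ = {x} := by
    rw [himg]
    ext y
    simp only [Finset.mem_sdiff, Finset.mem_univ, Finset.mem_erase, true_and,
      Finset.mem_singleton, not_and, and_true]
    constructor
    · intro h
      by_contra hne
      exact h hne
    · rintro rfl h
      exact absurd rfl h
  unfold hole
  rw [hsd, dif_pos ⟨x, Finset.mem_singleton_self x⟩]
  simp

lemma Pnon_all_ne {α : Fin n → Fin n} {j e : Fin n} (h : Pnon α j e) :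
    ∀ i, α i ≠ e := by
  intro i
  by_cases hi : i = j
  · intro heq
    have h3 := h.2.2.1
    rw [hi] at heq
    rw [heq] at h3
    omega
  · exact h.1 i hi

lemma Ppark_all_ne {α : Fin n → Fin n} {j s : Fin n} (h : Ppark α j s) :
    ∀ i, α i ≠ s := by
  intro i
  by_cases hi : i = j
  · intro heq
    have h3 := h.2.2.1
    rw [hi] at heq
    rw [heq] at h3
    omega
  · exact h.1 i hi

lemma hole_of_Pnon {α : Fin n → Fin n} {j e : Fin n} (h : Pnon α j e) :
    hole α = (e : ℕ) :=
  hole_eq (image_eq_erase (Pnon_all_ne h) h.2.1)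

lemma hole_of_Ppark {α : Fin n → Fin n} {j s : Fin n} (h : Ppark α j s) :
    hole α = (s : ℕ) :=
  hole_eq (image_eq_erase (Ppark_all_ne h) h.2.1)

/-- The involution: rotate all preferences around the hole. -/
def invol (α : Fin n → Fin n) : Fin n → Fin n :=
  fun i => rot n (hole α) (α i)

lemma rot_inj {h : ℕ} {v w : Fin n} (hv : (v : ℕ) ≠ h) (hw : (w : ℕ) ≠ h)
    (hvw : v ≠ w) : rot n h v ≠ rot n h w := by
  intro heq
  have h1 := rot_val h v
  have h2 := rot_val h w
  have h3 : (rot n h v : ℕ) = (rot n h w : ℕ) := by rw [heq]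
  have h4 : (v : ℕ) ≠ (w : ℕ) := fun hh => hvw (Fin.ext hh)
  have hvlt := v.isLt
  have hwlt := w.isLt
  rw [h1, h2] at h3
  split_ifs at h3 <;> omega

/-- Transfer: a parking function with `n-1` lucky cars maps to a non-parking list
with `n-1` lucky cars. -/
lemma Pnon_invol_of_Ppark {α : Fin n → Fin n} {j s : Fin n} (h : Ppark α j s) :
    Pnon (invol α) j ⟨n - 1 - (s : ℕ), by omega⟩ := by
  obtain ⟨h1, h2, h3, h4⟩ := h
  have hs := s.isLt
  have hhole : hole α = (s : ℕ) := hole_of_Ppark ⟨h1, h2, h3, h4⟩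
  have hβ : ∀ i, ((invol α) i : ℕ) =
      if (α i : ℕ) < (s : ℕ) then (α i : ℕ) + (n - (s : ℕ)) else (α i : ℕ) - (s : ℕ) - 1 := by
    intro i
    rw [invol, hhole, rot_val]
  refine ⟨?_, ?_, ?_, ?_⟩
  · intro i hi heq
    have := hβ i
    rw [heq] at this
    have hne : (α i : ℕ) ≠ (s : ℕ) := fun hh => h1 i hi (Fin.ext hh)
    have hlt := (α i).isLt
    simp only at this
    split_ifs at this <;> omega
  · intro i k hi hk hik
    rw [invol, invol, hhole]
    refine rot_inj ?_ ?_ (fun heq => ?_)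
    · exact fun hh => h1 i hi (Fin.ext hh)
    · exact fun hh => h1 k hk (Fin.ext hh)
    · exact h2 i k hi hk hik heq
  · show n - 1 - (s : ℕ) < ((invol α) j : ℕ)
    rw [hβ j, if_pos h3]
    omega
  · intro t ht
    rw [hβ j] at ht
    rw [if_pos h3] at ht
    have htlt := t.isLt
    set v : Fin n := ⟨(t : ℕ) - (n - (s : ℕ)), by omega⟩ with hv
    have hvval : (v : ℕ) = (t : ℕ) - (n - (s : ℕ)) := rfl
    obtain ⟨i, hij, heq⟩ := h4 v (by rw [hvval]; omega) (by rw [hvval]; omega)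
    refine ⟨i, hij, ?_⟩
    apply Fin.ext
    rw [hβ i, heq, hvval]
    have : (t : ℕ) - (n - (s : ℕ)) < (s : ℕ) := by omega
    rw [if_pos this]
    omega

/-- Transfer: a non-parking list with `n-1` lucky cars maps to a parking function
with `n-1` lucky cars. -/
lemma Ppark_invol_of_Pnon {α : Fin n → Fin n} {j e : Fin n} (h : Pnon α j e) :
    Ppark (invol α) j ⟨n - 1 - (e : ℕ), by omega⟩ := by
  obtain ⟨h1, h2, h3, h4⟩ := h
  have he := e.isLt
  have hhole : hole α = (e : ℕ) := hole_of_Pnon ⟨h1, h2, h3, h4⟩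
  have hβ : ∀ i, ((invol α) i : ℕ) =
      if (α i : ℕ) < (e : ℕ) then (α i : ℕ) + (n - (e : ℕ)) else (α i : ℕ) - (e : ℕ) - 1 := by
    intro i
    rw [invol, hhole, rot_val]
  refine ⟨?_, ?_, ?_, ?_⟩
  · intro i hi heq
    have := hβ i
    rw [heq] at this
    have hne : (α i : ℕ) ≠ (e : ℕ) := fun hh => h1 i hi (Fin.ext hh)
    have hlt := (α i).isLt
    simp only at this
    split_ifs at this <;> omega
  · intro i k hi hk hik
    rw [invol, invol, hhole]
    refine rot_inj ?_ ?_ (fun heq => ?_)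
    · exact fun hh => h1 i hi (Fin.ext hh)
    · exact fun hh => h1 k hk (Fin.ext hh)
    · exact h2 i k hi hk hik heq
  · show ((invol α) j : ℕ) < n - 1 - (e : ℕ)
    have hlt := (α j).isLt
    rw [hβ j, if_neg (by omega)]
    omega
  · intro t ht hts
    rw [hβ j, if_neg (by omega)] at ht
    have htlt := t.isLt
    have hts' : (t : ℕ) < n - 1 - (e : ℕ) := hts
    set v : Fin n := ⟨(t : ℕ) + (e : ℕ) + 1, by omega⟩ with hv
    have hvval : (v : ℕ) = (t : ℕ) + (e : ℕ) + 1 := rfl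
    obtain ⟨i, hij, heq⟩ := h4 v (by rw [hvval]; omega)
    refine ⟨i, hij, ?_⟩
    apply Fin.ext
    rw [hβ i, heq, hvval, if_neg (by omega)]
    omega

lemma invol_invol_of_Ppark {α : Fin n → Fin n} {j s : Fin n} (h : Ppark α j s) :
    invol (invol α) = α := by
  have hs := s.isLt
  have hhole : hole α = (s : ℕ) := hole_of_Ppark h
  have hP := Pnon_invol_of_Ppark h
  have hhole2 : hole (invol α) = n - 1 - (s : ℕ) := hole_of_Pnon hP
  funext i
  show rot n (hole (invol α)) (rot n (hole α) (α i)) = α i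
  rw [hhole, hhole2]
  exact rot_rot hs (fun hh => Ppark_all_ne h i (Fin.ext hh))

lemma invol_invol_of_Pnon {α : Fin n → Fin n} {j e : Fin n} (h : Pnon α j e) :
    invol (invol α) = α := by
  have he := e.isLt
  have hhole : hole α = (e : ℕ) := hole_of_Pnon h
  have hP := Ppark_invol_of_Pnon h
  have hhole2 : hole (invol α) = n - 1 - (e : ℕ) := hole_of_Ppark hP
  funext i
  show rot n (hole (invol α)) (rot n (hole α) (α i)) = α i
  rw [hhole, hhole2]
  exact rot_rot he (fun hh => Pnon_all_ne h i (Fin.ext hh))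

end Aux

/-- For `n ≥ 2`, among preference lists with exactly `n-1` lucky cars, exactly half
are parking functions: the number of non-parking-functions with `n-1` lucky cars
equals the number of parking functions with `n-1` lucky cars, and each count is
`Lₙ / 2`. -/
theorem half_parking_functions (n : ℕ) (hn : 2 ≤ n) :
    (Finset.univ.filter (fun α : Fin n → Fin n =>
        (luckyCount α : ℤ) = (n : ℤ) - 1 ∧ ¬ IsParkingFunction α)).card
      = (Finset.univ.filter (fun α : Fin n → Fin n =>
        (luckyCount α : ℤ) = (n : ℤ) - 1 ∧ IsParkingFunction α)).card ∧
    2 * (Finset.univ.filter (fun α : Fin n → Fin n =>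
        (luckyCount α : ℤ) = (n : ℤ) - 1 ∧ IsParkingFunction α)).card = luckyL n := by
  have hn1 : 1 ≤ n := by omega
  have hcast : ∀ α : Fin n → Fin n,
      ((luckyCount α : ℤ) = (n : ℤ) - 1) ↔ luckyCount α = n - 1 := by
    intro α
    omega
  have hmemA : ∀ α : Fin n → Fin n,
      ((luckyCount α : ℤ) = (n : ℤ) - 1 ∧ ¬ IsParkingFunction α) ↔ ∃ j e, Pnon α j e := by
    intro α
    rw [hcast α]
    exact char_non α hn1
  have hmemB : ∀ α : Fin n → Fin n,
      ((luckyCount α : ℤ) = (n : ℤ) - 1 ∧ IsParkingFunction α) ↔ ∃ j s, Ppark α j s := by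
    intro α
    rw [hcast α]
    exact char_park α hn1
  have hcards : (Finset.univ.filter (fun α : Fin n → Fin n =>
        (luckyCount α : ℤ) = (n : ℤ) - 1 ∧ ¬ IsParkingFunction α)).card
      = (Finset.univ.filter (fun α : Fin n → Fin n =>
        (luckyCount α : ℤ) = (n : ℤ) - 1 ∧ IsParkingFunction α)).card := by
    apply Finset.card_bij' (fun α _ => invol α) (fun α _ => invol α)
    · intro α hα
      simp only [Finset.mem_filter, Finset.mem_univ, true_and] at hα ⊢
      obtain ⟨j, e, hP⟩ := (hmemA α).1 hα
      exact (hmemB _).2 ⟨j, _, Ppark_invol_of_Pnon hP⟩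
    · intro α hα
      simp only [Finset.mem_filter, Finset.mem_univ, true_and] at hα ⊢
      obtain ⟨j, s, hP⟩ := (hmemB α).1 hα
      exact (hmemA _).2 ⟨j, _, Pnon_invol_of_Ppark hP⟩
    · intro α hα
      simp only [Finset.mem_filter, Finset.mem_univ, true_and] at hα
      obtain ⟨j, e, hP⟩ := (hmemA α).1 hα
      exact invol_invol_of_Pnon hP
    · intro α hα
      simp only [Finset.mem_filter, Finset.mem_univ, true_and] at hα
      obtain ⟨j, s, hP⟩ := (hmemB α).1 hα
      exact invol_invol_of_Ppark hP
  refine ⟨hcards, ?_⟩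
  have hsplit :
      (Finset.univ.filter (fun α : Fin n → Fin n =>
        (luckyCount α : ℤ) = (n : ℤ) - 1 ∧ IsParkingFunction α)).card
      + (Finset.univ.filter (fun α : Fin n → Fin n =>
        (luckyCount α : ℤ) = (n : ℤ) - 1 ∧ ¬ IsParkingFunction α)).card
      = luckyL n := by
    rw [luckyL]
    rw [show (Finset.univ.filter (fun α : Fin n → Fin n =>
        (luckyCount α : ℤ) = (n : ℤ) - 1 ∧ IsParkingFunction α))
      = (Finset.univ.filter (fun α : Fin n → Fin n =>
        (luckyCount α : ℤ) = (n : ℤ) - 1)).filter (fun α => IsParkingFunction α) by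
        rw [Finset.filter_filter]]
    rw [show (Finset.univ.filter (fun α : Fin n → Fin n =>
        (luckyCount α : ℤ) = (n : ℤ) - 1 ∧ ¬ IsParkingFunction α))
      = (Finset.univ.filter (fun α : Fin n → Fin n =>
        (luckyCount α : ℤ) = (n : ℤ) - 1)).filter (fun α => ¬ IsParkingFunction α) by
        rw [Finset.filter_filter]]
    exact Finset.card_filter_add_card_filter_not _
  omega
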